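/- Let s, d ≥ 1, let ℬ be a finite index set, and let β_{k,j,b} ∈ ℂ^d for k, j ∈ {0,…,s−1} and b ∈ ℬ be vectors satisfying, for every k, the completeness relation Σ_{b∈ℬ} Σ_{j=0}^{s−1} |β_{k,j,b}⟩⟨β_{k,j,b}| = I_d. Define the operators M_{b,t} : ℂ^d → ℂ^s by M_{b,t} = (1/s)·Σ_{j=0}^{s−1} Σ_{k=0}^{s−1} e^{2πi t k/s} |j⟩⟨β_{k,j,b}|, for b ∈ ℬ and t ∈ {0,…,s−1}. Then Σ_{b∈ℬ} Σ_{t=0}^{s−1} M_{b,t}† M_{b,t} = I_d, i.e., the M_{b,t} are the Kraus operators of a complete measurement. -/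

import Mathlib

/-!
Writing `A_{k,b} = Σ_j |j⟩⟨β_{k,j,b}|`, the operator `M_{b,t}` is `(1/s) Σ_k ω^{tk} A_{k,b}` with `ω = e^{2πi/s}`, a
discrete Fourier transform in `k`. Orthogonality of the characters `t ↦ ω^{tk}` (Parseval) gives
`Σ_t M_{b,t}† M_{b,t} = (1/s) Σ_k A_{k,b}† A_{k,b}`, and `A_{k,b}† A_{k,b} = Σ_j |β_{k,j,b}⟩⟨β_{k,j,b}|`,
so summing over `b` and using completeness for each of the `s` values of `k` gives `I`.
-/

open Matrix Complex
open scoped Matrix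

noncomputable section

/-- The operator M_{b,t} = (1/s)·Σ_{j,k} e^{2πitk/s}|j⟩⟨β_{k,j,b}|. -/
def Mop {s d : ℕ} {B : Type*} (β : Fin s → Fin s → B → (Fin d → ℂ)) (b : B) (t : Fin s) :
    Matrix (Fin s) (Fin d) ℂ :=
  ((s : ℂ))⁻¹ • ∑ j : Fin s, ∑ k : Fin s,
    Complex.exp (2 * (Real.pi : ℂ) * I * ((t : ℕ) : ℂ) * ((k : ℕ) : ℂ) / (s : ℂ)) •
      Matrix.vecMulVec (fun r => if r = j then (1 : ℂ) else 0) (star (β k j b))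

open Finset

theorem Complex.sum_exp_two_pi_I_mul_div {s : ℕ} (hs : s ≠ 0) {m : ℤ} (hm : |m| < s) :
    ∑ t : Fin s, exp (2 * Real.pi * I * (t : ℕ) * m / s) = if m = 0 then (s : ℂ) else 0 := by
  set z := exp (2 * Real.pi * I / s) ^ m
  have hz : ∀ t : ℕ, exp (2 * Real.pi * I * t * m / s) = z ^ t := by
    intro t
    rw [← zpow_natCast, ← _root_.zpow_mul, ← exp_int_mul]
    congr 1
    push_cast
    ring
  simp only [hz]
  split_ifs with h
  · simp [z, h]
  have hz1 : z ≠ 1 := by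
    rw [Ne, (isPrimitiveRoot_exp s hs).zpow_eq_one_iff_dvd]
    exact fun hdvd => h (Int.eq_zero_of_abs_lt_dvd hdvd hm)
  have hzs : z ^ s = 1 := by
    rw [← zpow_natCast, ← _root_.zpow_mul, mul_comm m, _root_.zpow_mul, zpow_natCast,
      (isPrimitiveRoot_exp s hs).pow_eq_one, _root_.one_zpow]
  rw [Fin.sum_univ_eq_sum_range (z ^ ·)]
  exact (mul_eq_zero.mp (by rw [geom_sum_mul, hzs, sub_self])).resolve_right (sub_ne_zero.mpr hz1)

theorem Complex.sum_star_exp_mul_exp {s : ℕ} (hs : s ≠ 0) (k k' : Fin s) :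
    ∑ t : Fin s, star (exp (2 * Real.pi * I * (t : ℕ) * (k : ℕ) / s)) *
      exp (2 * Real.pi * I * (t : ℕ) * (k' : ℕ) / s) = if k = k' then (s : ℂ) else 0 := by
  have hterm : ∀ t : Fin s, star (exp (2 * Real.pi * I * (t : ℕ) * (k : ℕ) / s)) *
      exp (2 * Real.pi * I * (t : ℕ) * (k' : ℕ) / s) =
        exp (2 * Real.pi * I * (t : ℕ) * (((k' : ℕ) : ℤ) - (k : ℕ) : ℤ) / s) := by
    intro t
    rw [star_def, ← exp_conj, ← exp_add]
    congr 1
    simp only [map_div₀, map_mul, conj_I, conj_ofReal, conj_natCast, map_ofNat]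
    push_cast
    ring
  have hlt : |((k' : ℕ) : ℤ) - (k : ℕ)| < s := by
    rw [abs_lt]
    constructor <;> omega
  simp only [hterm, sum_exp_two_pi_I_mul_div hs hlt, sub_eq_zero, Nat.cast_inj, Fin.val_inj,
    eq_comm]

/-- Parseval's identity for a transform with orthogonal kernel `c`, with matrix coefficients. -/
theorem Matrix.sum_conjTranspose_mul_sum_smul {T K m n 𝕜 : Type*} [Fintype T] [Fintype K]
    [DecidableEq K] [Fintype m] [CommSemiring 𝕜] [StarRing 𝕜] (c : T → K → 𝕜) (N : 𝕜)
    (hc : ∀ k k', ∑ t, star (c t k) * c t k' = if k = k' then N else 0)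
    (A : K → Matrix m n 𝕜) :
    ∑ t, (∑ k, c t k • A k)ᴴ * ∑ k, c t k • A k = N • ∑ k, (A k)ᴴ * A k := by
  calc ∑ t, (∑ k, c t k • A k)ᴴ * ∑ k, c t k • A k
      = ∑ k', ∑ k, (∑ t, star (c t k) * c t k') • ((A k)ᴴ * A k') := by
        simp only [conjTranspose_sum, conjTranspose_smul, Matrix.sum_mul, Matrix.mul_sum,
          Matrix.smul_mul, Matrix.mul_smul, smul_sum, smul_smul, sum_smul, mul_comm (c _ _)]
        rw [sum_comm]
        exact sum_congr rfl fun k' _ => sum_comm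
    _ = N • ∑ k, (A k)ᴴ * A k := by
        simp only [hc, ite_smul, zero_smul, sum_ite_eq', mem_univ, if_true, smul_sum]

theorem Matrix.conjTranspose_mul_self_of_star_eq_sum_vecMulVec {ι m α : Type*} [Fintype ι]
    [NonUnitalSemiring α] [StarRing α] (v : ι → m → α) :
    (of fun j => star (v j))ᴴ * (of fun j => star (v j)) = ∑ j, vecMulVec (v j) (star (v j)) := by
  ext i l
  simp [mul_apply, Matrix.sum_apply, vecMulVec_apply]

theorem Mop_eq_sum_smul {s d : ℕ} {B : Type*} (β : Fin s → Fin s → B → (Fin d → ℂ)) (b : B)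
    (t : Fin s) :
    Mop β b t = ∑ k : Fin s, ((s : ℂ)⁻¹ * exp (2 * Real.pi * I * (t : ℕ) * (k : ℕ) / s)) •
      of fun j => star (β k j b) := by
  ext m i
  simp only [Mop, Matrix.smul_apply, Matrix.sum_apply, vecMulVec_apply, of_apply, Pi.star_apply,
    smul_eq_mul, ite_mul, one_mul, zero_mul, mul_ite, mul_zero]
  rw [sum_comm]
  simp only [sum_ite_eq, mem_univ, if_true, mul_sum, mul_assoc]

theorem Mop_complete_measurement_general (s d : ℕ) (hs : 1 ≤ s)
    (B : Type*) [Fintype B] (β : Fin s → Fin s → B → (Fin d → ℂ))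
    (hcomp : ∀ k : Fin s,
      ∑ b : B, ∑ j : Fin s, Matrix.vecMulVec (β k j b) (star (β k j b)) = 1) :
    ∑ b : B, ∑ t : Fin s, (Mop β b t)ᴴ * Mop β b t = 1 := by
  have hs0 : (s : ℂ) ≠ 0 := by exact_mod_cast (by omega : s ≠ 0)
  have horth : ∀ k k' : Fin s, ∑ t : Fin s,
      star ((s : ℂ)⁻¹ * exp (2 * Real.pi * I * (t : ℕ) * (k : ℕ) / s)) *
        ((s : ℂ)⁻¹ * exp (2 * Real.pi * I * (t : ℕ) * (k' : ℕ) / s)) =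
      if k = k' then (s : ℂ)⁻¹ else 0 := by
    intro k k'
    simp only [star_mul', star_inv₀, star_natCast, mul_mul_mul_comm _ _ (s : ℂ)⁻¹, ← mul_sum,
      sum_star_exp_mul_exp (by omega : s ≠ 0)]
    split_ifs <;> simp [hs0]
  calc ∑ b, ∑ t, (Mop β b t)ᴴ * Mop β b t
      = ∑ b, (s : ℂ)⁻¹ • ∑ k, (of fun j => star (β k j b))ᴴ * of fun j => star (β k j b) := by
        simp only [Mop_eq_sum_smul]
        exact sum_congr rfl fun b _ => sum_conjTranspose_mul_sum_smul _ _ horth _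
    _ = (s : ℂ)⁻¹ • ∑ k : Fin s, ∑ b, ∑ j, vecMulVec (β k j b) (star (β k j b)) := by
        rw [← smul_sum, sum_comm]
        simp only [conjTranspose_mul_self_of_star_eq_sum_vecMulVec]
    _ = 1 := by
        simp only [hcomp, sum_const, card_univ, Fintype.card_fin, ← Nat.cast_smul_eq_nsmul ℂ,
          smul_smul, inv_mul_cancel₀ hs0, one_smul]

/-- If the vectors β_{k,j,b} satisfy the completeness relation
Σ_b Σ_j |β_{k,j,b}⟩⟨β_{k,j,b}| = I for every k, then the operators M_{b,t} are the Kraus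
operators of a complete measurement: Σ_{b,t} M_{b,t}† M_{b,t} = I. -/
theorem Mop_complete_measurement (s d : ℕ) (hs : 1 ≤ s) (hd : 1 ≤ d)
    (B : Type*) [Fintype B] (β : Fin s → Fin s → B → (Fin d → ℂ))
    (hcomp : ∀ k : Fin s,
      ∑ b : B, ∑ j : Fin s, Matrix.vecMulVec (β k j b) (star (β k j b)) = 1) :
    ∑ b : B, ∑ t : Fin s, (Mop β b t)ᴴ * Mop β b t = 1 :=
  Mop_complete_measurement_general s d hs B β hcomp

end
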